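/- arXiv:1610.10062 — 7 statements merged into one kernel-verified Lean document; each statement's English description precedes it below -/
import Mathlib

section
/- Let Φ : ℂ → ℂ satisfy Φ(4z) = 2·Φ(z)·(2 + Φ(z)) for all z ∈ ℂ. Then for every s ∈ ℂ, the unconditional sum ∑_{μ > 0, Φ(-μ) = -1} μ^{-s} equals 4^s · ∑_{μ > 0, Φ(-μ) = -2} μ^{-s}, where both sums (tsum) range over the indicated sets of positive real numbers μ and μ^{-s} denotes the complex power exp(-s·log μ) of the positive real μ. -/
/-!
Since `R(w) + 2 = 2 (w + 1)²`, the value `-2` has `-1` as its only preimage under `R`,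
so `Φ(-4μ) = -2 ↔ Φ(-μ) = -1`. Hence `μ ↦ 4μ` maps the first index set bijectively onto
the second, and `μ^{-s} = 4^s (4μ)^{-s}`.
-/

theorem two_mul_mul_two_add_eq_neg_two_iff {w : ℂ} : 2 * w * (2 + w) = -2 ↔ w = -1 := by
  constructor
  · intro h
    have hsq : (w + 1) ^ 2 = 0 := by linear_combination h / 2
    linear_combination pow_eq_zero_iff two_ne_zero |>.mp hsq
  · rintro rfl
    norm_num

theorem ofReal_cpow_neg_eq_cpow_mul_ofReal_mul_cpow_neg {c x : ℝ} (hc : 0 < c) (hx : 0 ≤ x)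
    (s : ℂ) : (x : ℂ) ^ (-s) = (c : ℂ) ^ s * ((c * x : ℝ) : ℂ) ^ (-s) := by
  have hc' : (c : ℂ) ^ s ≠ 0 := by simp [Complex.cpow_eq_zero_iff, hc.ne']
  rw [Complex.ofReal_mul, Complex.mul_cpow_ofReal_nonneg hc.le hx, Complex.cpow_neg (c : ℂ),
    ← mul_assoc, mul_inv_cancel₀ hc', one_mul]

theorem tsum_subtype_ofReal_cpow_neg_eq_of_mul_left {P Q : ℝ → Prop} {c : ℝ} (hc : 0 < c)
    (hPQ : ∀ μ, P μ ↔ Q (c * μ)) (hP : ∀ μ, P μ → 0 ≤ μ) (s : ℂ) :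
    ∑' μ : {μ // P μ}, ((μ : ℝ) : ℂ) ^ (-s) =
      (c : ℂ) ^ s * ∑' μ : {μ // Q μ}, ((μ : ℝ) : ℂ) ^ (-s) := by
  rw [← (Equiv.subtypeEquiv (Equiv.mulLeft₀ c hc.ne') hPQ).tsum_eq, ← tsum_mul_left]
  exact tsum_congr fun μ => ofReal_cpow_neg_eq_cpow_mul_ofReal_mul_cpow_neg hc (hP μ μ.2) s

/-- For the diamond fractal: `ζ_{Φ,-1}(s) = 4^s · ζ_{Φ,-2}(s)`, where
`ζ_{Φ,w}(s)` is the unconditional sum of `μ^{-s}` over `{μ > 0 : Φ(-μ) = w}`. -/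
theorem diamond_zeta_neg_one_eq (Φ : ℂ → ℂ)
    (hΦ : ∀ z : ℂ, Φ (4 * z) = 2 * Φ z * (2 + Φ z)) (s : ℂ) :
    (∑' μ : {μ : ℝ // 0 < μ ∧ Φ (-(μ : ℂ)) = -1}, ((μ : ℝ) : ℂ) ^ (-s))
      = (4 : ℂ) ^ s *
        ∑' μ : {μ : ℝ // 0 < μ ∧ Φ (-(μ : ℂ)) = -2}, ((μ : ℝ) : ℂ) ^ (-s) := by
  have hscale : ∀ μ : ℝ,
      (0 < μ ∧ Φ (-(μ : ℂ)) = -1) ↔ (0 < 4 * μ ∧ Φ (-((4 * μ : ℝ) : ℂ)) = -2) := by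
    intro μ
    have h4 : -((4 * μ : ℝ) : ℂ) = 4 * -(μ : ℂ) := by push_cast; ring
    rw [h4, hΦ, two_mul_mul_two_add_eq_neg_two_iff]
    exact and_congr_left' (by constructor <;> intro h <;> linarith)
  simpa using tsum_subtype_ofReal_cpow_neg_eq_of_mul_left four_pos hscale (fun μ h => h.1.le) s
end

section
/- Let Φ : ℂ → ℂ satisfy Φ(4z) = 2·Φ(z)·(2 + Φ(z)) for all z ∈ ℂ, and let s ∈ ℂ be such that the family μ ↦ μ^{-s} is summable over the set {μ ∈ ℝ : μ > 0, Φ(-μ) = 0}. Then ∑_{μ > 0, Φ(-μ) = -2} μ^{-s} = (4^s - 1) · ∑_{μ > 0, Φ(-μ) = 0} μ^{-s}. -/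
/-!
Since `Φ(-4μ) = R(Φ(-μ))` and `R⁻¹{0} = {0, -2}`, scaling by `4` maps the positive `μ` with
`Φ(-μ) ∈ {0, -2}` bijectively onto those with `Φ(-μ) = 0`. As `(4μ)^{-s} = 4^{-s} μ^{-s}`, this
gives `ζ₀ = 4^{-s} (ζ₀ + ζ₋₂)`, i.e. `ζ₋₂ = (4^s - 1) ζ₀`.
-/

open Set

/-- `ζ_{Φ,w}` sums over `zetaIndexSet Φ {w}`. -/
def zetaIndexSet (Φ : ℂ → ℂ) (W : Set ℂ) : Set ℝ :=
  {μ | 0 < μ ∧ Φ (-(μ : ℂ)) ∈ W}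

lemma zetaIndexSet_union (Φ : ℂ → ℂ) (V W : Set ℂ) :
    zetaIndexSet Φ (V ∪ W) = zetaIndexSet Φ V ∪ zetaIndexSet Φ W := by
  ext μ
  simp only [zetaIndexSet, mem_ofPred_eq, mem_union]
  tauto

lemma disjoint_zetaIndexSet (Φ : ℂ → ℂ) {V W : Set ℂ} (h : Disjoint V W) :
    Disjoint (zetaIndexSet Φ V) (zetaIndexSet Φ W) :=
  disjoint_left.2 fun _ hV hW => disjoint_left.1 h hV.2 hW.2

lemma image_mul_zetaIndexSet_preimage {Φ R : ℂ → ℂ} {c : ℝ} (hc : 0 < c)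
    (hΦ : ∀ z, Φ (c * z) = R (Φ z)) (W : Set ℂ) :
    (c * ·) '' zetaIndexSet Φ (R ⁻¹' W) = zetaIndexSet Φ W := by
  have hΦneg : ∀ μ : ℝ, Φ (-((c * μ : ℝ) : ℂ)) = R (Φ (-(μ : ℂ))) := fun μ => by
    rw [← hΦ]; push_cast; ring_nf
  ext μ
  constructor
  · rintro ⟨ν, ⟨hν, hW⟩, rfl⟩
    exact ⟨mul_pos hc hν, by rwa [hΦneg]⟩
  · rintro ⟨hμ, hW⟩
    have hcμ : c * (μ / c) = μ := mul_div_cancel₀ μ hc.ne'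
    refine ⟨μ / c, ⟨div_pos hμ hc, ?_⟩, hcμ⟩
    rw [mem_preimage, ← hΦneg, hcμ]
    exact hW

lemma preimage_two_mul_two_add_zero :
    (fun w : ℂ => 2 * w * (2 + w)) ⁻¹' {0} = {0} ∪ {-2} := by
  ext w
  simp only [mem_preimage, mem_singleton_iff, mem_union, mul_eq_zero, two_ne_zero, false_or]
  rw [add_eq_zero_iff_eq_neg']

section Scaling

variable {c : ℝ} {S : Set ℝ} (s : ℂ)

lemma cpow_neg_ofReal_mul (hc : 0 < c) {μ : ℝ} (hμ : 0 ≤ μ) :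
    (((c * μ : ℝ)) : ℂ) ^ (-s) = (c : ℂ) ^ (-s) * (μ : ℂ) ^ (-s) := by
  push_cast
  exact Complex.mul_cpow_ofReal_nonneg hc.le hμ (-s)

lemma summable_cpow_neg_image_mul_iff (hc : 0 < c) (hS : ∀ μ ∈ S, 0 ≤ μ) :
    (Summable fun μ : (c * ·) '' S => (μ : ℂ) ^ (-s)) ↔
      Summable fun μ : S => (μ : ℂ) ^ (-s) := by
  have hinj : InjOn (c * ·) S := (mul_right_injective₀ hc.ne').injOn
  have hc' : (c : ℂ) ^ (-s) ≠ 0 := by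
    rw [Ne, Complex.cpow_eq_zero_iff]
    exact fun h => hc.ne' (Complex.ofReal_eq_zero.1 h.1)
  rw [← (Equiv.Set.imageOfInjOn _ _ hinj).summable_iff,
    ← summable_mul_left_iff hc' (f := fun μ : S => (μ : ℂ) ^ (-s))]
  exact summable_congr fun μ => cpow_neg_ofReal_mul s hc (hS μ μ.2)

lemma tsum_cpow_neg_image_mul (hc : 0 < c) (hS : ∀ μ ∈ S, 0 ≤ μ) :
    ∑' μ : (c * ·) '' S, (μ : ℂ) ^ (-s) = (c : ℂ) ^ (-s) * ∑' μ : S, (μ : ℂ) ^ (-s) := by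
  rw [tsum_image (fun μ : ℝ => (μ : ℂ) ^ (-s)) (mul_right_injective₀ hc.ne').injOn,
    ← tsum_mul_left]
  exact tsum_congr fun μ => cpow_neg_ofReal_mul s hc (hS μ μ.2)

end Scaling

/-- For the diamond fractal: `ζ_{Φ,-2}(s) = (4^s - 1) · ζ_{Φ,0}(s)`, where
`ζ_{Φ,w}(s)` is the unconditional sum of `μ^{-s}` over `{μ > 0 : Φ(-μ) = w}`,
assuming summability of the family for `w = 0`. -/
theorem diamond_zeta_neg_two_eq (Φ : ℂ → ℂ)
    (hΦ : ∀ z : ℂ, Φ (4 * z) = 2 * Φ z * (2 + Φ z)) (s : ℂ)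
    (hsum : Summable fun μ : {μ : ℝ // 0 < μ ∧ Φ (-(μ : ℂ)) = 0} =>
      ((μ : ℝ) : ℂ) ^ (-s)) :
    (∑' μ : {μ : ℝ // 0 < μ ∧ Φ (-(μ : ℂ)) = -2}, ((μ : ℝ) : ℂ) ^ (-s))
      = ((4 : ℂ) ^ s - 1) *
        ∑' μ : {μ : ℝ // 0 < μ ∧ Φ (-(μ : ℂ)) = 0}, ((μ : ℝ) : ℂ) ^ (-s) := by
  let S₀ := zetaIndexSet Φ {0}
  let S₂ := zetaIndexSet Φ {-2}
  have hpos : ∀ μ ∈ S₀ ∪ S₂, 0 ≤ μ := fun _ hμ => hμ.elim (·.1.le) (·.1.le)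
  have himage : ((4 : ℝ) * ·) '' (S₀ ∪ S₂) = S₀ := by
    rw [← zetaIndexSet_union, ← preimage_two_mul_two_add_zero]
    exact image_mul_zetaIndexSet_preimage four_pos (by exact_mod_cast hΦ) _
  have hsum₀₂ : Summable fun μ : ↥(S₀ ∪ S₂) => (μ : ℂ) ^ (-s) := by
    rw [← summable_cpow_neg_image_mul_iff s four_pos hpos, himage]
    exact hsum
  have hsum₂ : Summable fun μ : S₂ => (μ : ℂ) ^ (-s) :=
    hsum₀₂.comp_injective (i := inclusion subset_union_right) (inclusion_injective _)
  have hdisj : Disjoint S₀ S₂ :=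
    disjoint_zetaIndexSet Φ (disjoint_singleton.2 (by norm_num))
  have hscale : ∑' μ : S₀, (μ : ℂ) ^ (-s)
      = (4 : ℂ) ^ (-s) * (∑' μ : S₀, (μ : ℂ) ^ (-s) + ∑' μ : S₂, (μ : ℂ) ^ (-s)) :=
    calc ∑' μ : S₀, (μ : ℂ) ^ (-s)
        = ∑' μ : ((4 : ℝ) * ·) '' (S₀ ∪ S₂), (μ : ℂ) ^ (-s) := by rw [himage]
      _ = (4 : ℂ) ^ (-s) * ∑' μ : ↥(S₀ ∪ S₂), (μ : ℂ) ^ (-s) := by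
        rw [tsum_cpow_neg_image_mul s four_pos hpos, Complex.ofReal_ofNat]
      _ = _ := by
        rw [Summable.tsum_union_disjoint (f := fun μ : ℝ => (μ : ℂ) ^ (-s)) hdisj hsum hsum₂]
  have h4 : (4 : ℂ) ^ s * (4 : ℂ) ^ (-s) = 1 := by
    rw [← Complex.cpow_add _ _ (by norm_num : (4 : ℂ) ≠ 0), add_neg_cancel, Complex.cpow_zero]
  change ∑' μ : S₂, (μ : ℂ) ^ (-s) = ((4 : ℂ) ^ s - 1) * ∑' μ : S₀, (μ : ℂ) ^ (-s)
  linear_combination (-(4 : ℂ) ^ s) * hscale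
    - (∑' μ : S₀, (μ : ℂ) ^ (-s) + ∑' μ : S₂, (μ : ℂ) ^ (-s)) * h4
end

section
/- Define G : ℂ → ℂ by G(s) = (4^s·(4^s - 1)/3) · ( 4/(4^s - 4) + 2/(4^s - 1) ). Let h : ℂ → ℂ be differentiable at 0 with h(0) = 1 and h'(0) = log 2. Then, as s → 0 with s ≠ 0, G(s)·h(s) tends to 2/3 and (G(s)·h(s) - 2/3)/s tends to (10/9)·log 2. -/
open Filter Topology

/-!
On the punctured neighbourhood of `0` we have `4^s ∉ {1, 4}`, and there `G(s)` simplifies to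
`φ(4^s)` with `φ(w) = 2w(w-2)/(w-4)`, so the apparent pole of `4/(4^s-4) + 2/(4^s-1)` at `s = 0`
is cancelled by the factor `4^s - 1`. Hence `G·h` agrees near `0` with `s ↦ φ(4^s)·h(s)`, which is
differentiable at `0` with value `φ(1) = 2/3` and, since `φ'(1) = 2/9` and `log 4 = 2 log 2`,
derivative `(2/9)·2 log 2 + (2/3)·log 2 = (10/9)·log 2`.
-/

theorem HasDerivAt.tendsto_nhdsNE_and_tendsto_slope_of_eventuallyEq
    {𝕜 : Type*} [NontriviallyNormedField 𝕜] {f g : 𝕜 → 𝕜} {f' x : 𝕜}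
    (hf : HasDerivAt f f' x) (hgf : g =ᶠ[𝓝[≠] x] f) :
    Tendsto g (𝓝[≠] x) (𝓝 (f x)) ∧
      Tendsto (fun s => (g s - f x) / (s - x)) (𝓝[≠] x) (𝓝 f') := by
  constructor
  · exact (hf.continuousAt.tendsto.mono_left nhdsWithin_le_nhds).congr' hgf.symm
  · refine (hasDerivAt_iff_tendsto_slope.mp hf).congr' ?_
    filter_upwards [hgf] with s hs
    rw [slope_def_field, hs]

theorem Complex.hasDerivAt_const_cpow_zero {a : ℂ} (ha : a ≠ 0) :
    HasDerivAt (fun s : ℂ => a ^ s) (Complex.log a) 0 := by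
  simpa using (Complex.hasStrictDerivAt_const_cpow (y := 0) (Or.inl ha)).hasDerivAt

theorem Complex.log_four : Complex.log 4 = 2 * Real.log 2 := by
  rw [show (4 : ℂ) = ((2 ^ 2 : ℝ) : ℂ) by norm_num,
    ← Complex.ofReal_log (by norm_num), Real.log_pow]
  push_cast
  ring

theorem eventually_four_cpow_ne_one_and_ne_four :
    ∀ᶠ s in 𝓝[≠] (0 : ℂ), (4 : ℂ) ^ s ≠ 1 ∧ (4 : ℂ) ^ s ≠ 4 := by
  have hderiv := Complex.hasDerivAt_const_cpow_zero (a := 4) (by norm_num)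
  have hlog : Complex.log 4 ≠ 0 := by
    rw [Complex.log_four]
    exact mul_ne_zero two_ne_zero (Complex.ofReal_ne_zero.mpr (by positivity))
  have hne_four : ∀ᶠ s in 𝓝 (0 : ℂ), (4 : ℂ) ^ s ≠ 4 :=
    hderiv.continuousAt.eventually_ne (by norm_num)
  filter_upwards [hderiv.eventually_ne hlog, nhdsWithin_le_nhds hne_four] with s hs1 hs4
  exact ⟨by simpa using hs1, hs4⟩

theorem diamond_factor_eq {w : ℂ} (h1 : w ≠ 1) (h4 : w ≠ 4) :
    (w * (w - 1) / 3) * (4 / (w - 4) + 2 / (w - 1)) = 2 * w * (w - 2) / (w - 4) := by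
  have h1' : w - 1 ≠ 0 := sub_ne_zero.mpr h1
  have h4' : w - 4 ≠ 0 := sub_ne_zero.mpr h4
  field_simp
  ring

theorem hasDerivAt_diamond_reduced :
    HasDerivAt (fun w : ℂ => 2 * w * (w - 2) / (w - 4)) (2 / 9) 1 := by
  have hid : HasDerivAt (fun w : ℂ => w) 1 1 := hasDerivAt_id' 1
  refine (((hid.const_mul 2).mul (hid.sub_const 2)).div (hid.sub_const 4) ?_).congr_deriv ?_ <;>
    norm_num

/-- The spectral zeta function of the diamond fractal, `ζ_L(s) = G(s)·h(s)` with
`G(s) = (4^s(4^s-1)/3)(4/(4^s-4) + 2/(4^s-1))` and `h = ζ_{Φ,0}` satisfying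
`h(0) = 1`, `h'(0) = log 2`, extends to `0` with `ζ_L(0) = 2/3` and
`ζ_L'(0) = (10/9)·log 2`. -/
theorem diamond_zeta_at_zero (G h : ℂ → ℂ)
    (hG : ∀ s : ℂ, G s = ((4 : ℂ) ^ s * ((4 : ℂ) ^ s - 1) / 3) *
      (4 / ((4 : ℂ) ^ s - 4) + 2 / ((4 : ℂ) ^ s - 1)))
    (hdiff : DifferentiableAt ℂ h 0) (h0 : h 0 = 1)
    (h0' : deriv h 0 = Real.log 2) :
    Tendsto (fun s : ℂ => G s * h s) (𝓝[≠] 0) (𝓝 (2 / 3)) ∧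
    Tendsto (fun s : ℂ => (G s * h s - 2 / 3) / s) (𝓝[≠] 0)
      (𝓝 ((10 / 9) * Real.log 2)) := by
  set φ : ℂ → ℂ := fun w => 2 * w * (w - 2) / (w - 4)
  have hpow := Complex.hasDerivAt_const_cpow_zero (a := 4) (by norm_num)
  have hφ : HasDerivAt (fun s : ℂ => φ (4 ^ s)) (2 / 9 * Complex.log 4) 0 :=
    hasDerivAt_diamond_reduced.comp_of_eq 0 hpow (Complex.cpow_zero 4).symm
  have hζ : HasDerivAt (fun s => φ (4 ^ s) * h s) (10 / 9 * Real.log 2) 0 := by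
    refine (hφ.mul hdiff.hasDerivAt).congr_deriv ?_
    rw [h0, h0', Complex.log_four, Complex.cpow_zero]
    norm_num [φ]
    ring
  have hζ0 : φ (4 ^ (0 : ℂ)) * h 0 = 2 / 3 := by norm_num [φ, h0]
  have hGφ : (fun s => G s * h s) =ᶠ[𝓝[≠] 0] fun s => φ (4 ^ s) * h s := by
    filter_upwards [eventually_four_cpow_ne_one_and_ne_four] with s ⟨hs1, hs4⟩
    rw [hG, diamond_factor_eq hs1 hs4]
  obtain ⟨hlim, hslope⟩ := hζ.tendsto_nhdsNE_and_tendsto_slope_of_eventuallyEq hGφ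
  rw [hζ0] at hlim hslope
  exact ⟨hlim, by simpa only [sub_zero] using hslope⟩
end

section
/- Let Φ : ℂ → ℂ satisfy Φ(5z) = Φ(z)·(5 + Φ(z)) for all z ∈ ℂ, and let s ∈ ℂ be such that the family μ ↦ μ^{-s} is summable over the set {μ ∈ ℝ : μ > 0, Φ(-μ) = 0}. Then ∑_{μ > 0, Φ(-μ) = -5} μ^{-s} = (5^s - 1) · ∑_{μ > 0, Φ(-μ) = 0} μ^{-s}. -/
/-!
The functional equation gives `Φ(-5ν) = R(Φ(-ν))`, so `ν ↦ 5ν` maps the positive `ν` with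
`Φ(-ν) ∈ R⁻¹{0} = {0, -5}` bijectively onto the positive `μ` with `Φ(-μ) = 0`. Since
`(5ν)^{-s} = 5^{-s} ν^{-s}`, this gives `ζ_{Φ,0} = 5^{-s} (ζ_{Φ,0} + ζ_{Φ,-5})`, and the same
bijection transfers summability from `ζ_{Φ,0}` to `ζ_{Φ,-5}`.
-/

open Complex Set

/-- For `W = {w}` this is the index set of `ζ_{Φ,w}`. -/
def posSpectrum (Φ : ℂ → ℂ) (W : Set ℂ) : Set ℝ :=
  Ioi 0 ∩ (fun μ : ℝ => Φ (-(μ : ℂ))) ⁻¹' W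

namespace posSpectrum

variable {Φ : ℂ → ℂ}

lemma union (W W' : Set ℂ) :
    posSpectrum Φ (W ∪ W') = posSpectrum Φ W ∪ posSpectrum Φ W' := by
  rw [posSpectrum, preimage_union, inter_union_distrib_left]; rfl

lemma disjoint {W W' : Set ℂ} (h : Disjoint W W') :
    Disjoint (posSpectrum Φ W) (posSpectrum Φ W') :=
  (h.preimage _).inter_left' _ |>.inter_right' _

lemma eq_image_mul {R : ℂ → ℂ} {c : ℝ} (hc : 0 < c) (hΦ : ∀ z, Φ (c * z) = R (Φ z))
    (W : Set ℂ) : posSpectrum Φ W = (c * ·) '' posSpectrum Φ (R ⁻¹' W) := by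
  ext μ
  constructor
  · rintro ⟨hμ, hW⟩
    refine ⟨μ / c, ⟨div_pos hμ hc, ?_⟩, mul_div_cancel₀ μ hc.ne'⟩
    have hscale : (c : ℂ) * -((μ / c : ℝ) : ℂ) = -(μ : ℂ) := by
      push_cast; field_simp [ofReal_ne_zero.2 hc.ne']
    show R _ ∈ W
    rwa [← hΦ, hscale]
  · rintro ⟨ν, ⟨hν, hW⟩, rfl⟩
    refine ⟨mul_pos hc hν, ?_⟩
    show Φ _ ∈ W
    rwa [ofReal_mul, neg_mul_eq_mul_neg, hΦ]

end posSpectrum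

section Dilation

variable {S : Set ℝ} {c : ℝ}

lemma tsum_image_mul_cpow_neg (hc : 0 < c) (hS : ∀ μ ∈ S, 0 ≤ μ) (s : ℂ) :
    ∑' μ : ↥((c * ·) '' S), ((μ : ℝ) : ℂ) ^ (-s) =
      (c : ℂ) ^ (-s) * ∑' μ : S, ((μ : ℝ) : ℂ) ^ (-s) := by
  rw [tsum_image (fun μ : ℝ => (μ : ℂ) ^ (-s)) (mul_right_injective₀ hc.ne').injOn,
    ← tsum_mul_left]
  refine tsum_congr fun μ => ?_
  rw [ofReal_mul, mul_cpow_ofReal_nonneg hc.le (hS μ μ.2)]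

lemma summable_image_mul_cpow_neg_iff (hc : 0 < c) (hS : ∀ μ ∈ S, 0 ≤ μ) (s : ℂ) :
    Summable (fun μ : ↥((c * ·) '' S) => ((μ : ℝ) : ℂ) ^ (-s)) ↔
      Summable (fun μ : S => ((μ : ℝ) : ℂ) ^ (-s)) := by
  have hc' : (c : ℂ) ^ (-s) ≠ 0 := cpow_ne_zero_iff.2 (.inl (ofReal_ne_zero.2 hc.ne'))
  refine (Equiv.Set.imageOfInjOn _ _ (mul_right_injective₀ hc.ne').injOn).summable_iff.symm.trans
    (.trans (summable_congr fun μ => ?_) (summable_mul_left_iff hc'))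
  change ((c * μ : ℝ) : ℂ) ^ (-s) = _
  rw [ofReal_mul, mul_cpow_ofReal_nonneg hc.le (hS μ μ.2)]

end Dilation

lemma gasket_preimage_zero : (fun z : ℂ => z * (5 + z)) ⁻¹' {0} = {0} ∪ {-5} := by
  ext z
  simp [add_comm (5 : ℂ), add_eq_zero_iff_eq_neg, or_comm]

/-- For the Sierpinski gasket: `ζ_{Φ,-5}(s) = (5^s - 1) · ζ_{Φ,0}(s)`, where
`ζ_{Φ,w}(s)` is the unconditional sum of `μ^{-s}` over `{μ > 0 : Φ(-μ) = w}`,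
assuming summability of the family for `w = 0`. -/
theorem gasket_zeta_neg_five_eq (Φ : ℂ → ℂ)
    (hΦ : ∀ z : ℂ, Φ (5 * z) = Φ z * (5 + Φ z)) (s : ℂ)
    (hsum : Summable fun μ : {μ : ℝ // 0 < μ ∧ Φ (-(μ : ℂ)) = 0} =>
      ((μ : ℝ) : ℂ) ^ (-s)) :
    (∑' μ : {μ : ℝ // 0 < μ ∧ Φ (-(μ : ℂ)) = -5}, ((μ : ℝ) : ℂ) ^ (-s))
      = ((5 : ℂ) ^ s - 1) *
        ∑' μ : {μ : ℝ // 0 < μ ∧ Φ (-(μ : ℂ)) = 0}, ((μ : ℝ) : ℂ) ^ (-s) := by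
  set A := posSpectrum Φ {0}
  set B := posSpectrum Φ {-5}
  change Summable fun μ : A => ((μ : ℝ) : ℂ) ^ (-s) at hsum
  change ∑' μ : B, ((μ : ℝ) : ℂ) ^ (-s) = _ * ∑' μ : A, ((μ : ℝ) : ℂ) ^ (-s)
  have hA : A = (5 * ·) '' (A ∪ B) := by
    rw [← posSpectrum.union, ← gasket_preimage_zero]
    exact posSpectrum.eq_image_mul (by norm_num) (by exact_mod_cast hΦ) _
  have hnonneg : ∀ μ ∈ A ∪ B, 0 ≤ μ := fun μ hμ => le_of_lt (hμ.elim And.left And.left)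
  have hsumB : Summable fun μ : B => ((μ : ℝ) : ℂ) ^ (-s) :=
    ((summable_image_mul_cpow_neg_iff (c := 5) (by norm_num) hnonneg s).1 (by rwa [hA] at hsum))
      |>.comp_injective (i := inclusion subset_union_right) (inclusion_injective _)
  have hAB : Disjoint A B := posSpectrum.disjoint (by norm_num)
  have hself : ∑' μ : A, ((μ : ℝ) : ℂ) ^ (-s) =
      (5 : ℂ) ^ (-s) * (∑' μ : A, ((μ : ℝ) : ℂ) ^ (-s) + ∑' μ : B, ((μ : ℝ) : ℂ) ^ (-s)) := by
    conv_lhs => rw [tsum_congr_set_coe (fun μ : ℝ => (μ : ℂ) ^ (-s)) hA]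
    rw [tsum_image_mul_cpow_neg (c := 5) (by norm_num) hnonneg,
      Summable.tsum_union_disjoint (f := fun μ : ℝ => (μ : ℂ) ^ (-s)) hAB hsum hsumB]
    norm_num
  have h5 : (5 : ℂ) ^ s * (5 : ℂ) ^ (-s) = 1 := by
    rw [cpow_neg, mul_inv_cancel₀ (cpow_ne_zero_iff.2 (.inl (by norm_num)))]
  set ζA := ∑' μ : A, ((μ : ℝ) : ℂ) ^ (-s)
  set ζB := ∑' μ : B, ((μ : ℝ) : ℂ) ^ (-s)
  linear_combination (-(5 : ℂ) ^ s) * hself - (ζA + ζB) * h5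
end

section
/- For every s ∈ ℂ with Re(s) > log 3 / log 5, the series ∑_{n=1}^∞ (3^{n-1} + 1) · 5^{-ns} converges and equals (5^s + 3)/(2·5^s·(5^s - 3)) + (3·5^s - 1)/(2·5^s·(5^s - 1)). -/
/-! With `z = 5^s` the series splits into two geometric series,
`∑ 3^n / z^(n+1) + ∑ 1 / z^(n+1) = 1/(z - 3) + 1/(z - 1)`, which converge because
`|z| = 5^(Re s) > 3`. The stated closed form is a partial-fraction rewriting of
`1/(z - 3) + 1/(z - 1)`. -/

open Complex

theorem hasSum_pow_div_pow_succ {K : Type*} [NormedField K] [CompleteSpace K] {b z : K}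
    (h : ‖b‖ < ‖z‖) : HasSum (fun n : ℕ => b ^ n / z ^ (n + 1)) (z - b)⁻¹ := by
  have hz : z ≠ 0 := norm_pos_iff.mp ((norm_nonneg b).trans_lt h)
  have hratio : ‖b / z‖ < 1 := by
    rwa [norm_div, div_lt_one (norm_pos_iff.mpr hz)]
  have hterm : (fun n : ℕ => b ^ n / z ^ (n + 1)) = fun n => z⁻¹ * (b / z) ^ n := by
    funext n
    rw [div_pow, pow_succ]
    field_simp
  rw [hterm, show z - b = z * (1 - b / z) by rw [mul_sub, mul_one, mul_div_cancel₀ _ hz],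
    mul_inv]
  exact (hasSum_geometric_of_norm_lt_one hratio).mul_left z⁻¹

theorem lt_norm_ofReal_cpow {a b : ℝ} (ha : 1 < a) (hb : 0 < b) {s : ℂ}
    (hs : Real.log b / Real.log a < s.re) : b < ‖(a : ℂ) ^ s‖ := by
  rw [norm_cpow_eq_rpow_re_of_pos (by linarith)]
  calc b = a ^ Real.logb a b := (Real.rpow_logb (by linarith) ha.ne' hb).symm
    _ < a ^ s.re := Real.rpow_lt_rpow_of_exponent_lt ha hs

theorem cpow_neg_succ_mul (x s : ℂ) (n : ℕ) :
    x ^ (-(((n : ℂ) + 1) * s)) = ((x ^ s) ^ (n + 1))⁻¹ := by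
  rw [cpow_neg, ← cpow_nat_mul]
  push_cast
  rfl

theorem inv_sub_three_add_inv_sub_one {K : Type*} [Field K] [NeZero (2 : K)] {z : K}
    (hz : z ≠ 0) (hz3 : z - 3 ≠ 0) (hz1 : z - 1 ≠ 0) :
    (z - 3)⁻¹ + (z - 1)⁻¹ = (z + 3) / (2 * z * (z - 3)) + (3 * z - 1) / (2 * z * (z - 1)) := by
  field_simp
  ring

/-- For `Re(s) > log 3 / log 5`, the geometric coefficient of `ζ_{Φ,-5}` in the
spectral zeta function of the double Sierpinski gasket:
`∑_{n=1}^∞ (3^{n-1} + 1) · 5^{-ns}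
  = (5^s + 3)/(2·5^s·(5^s - 3)) + (3·5^s - 1)/(2·5^s·(5^s - 1))`. -/
theorem double_gasket_coeff_neg_five (s : ℂ) (hs : Real.log 3 / Real.log 5 < s.re) :
    HasSum
      (fun n : ℕ => ((3 : ℂ) ^ n + 1) * (5 : ℂ) ^ (-(((n : ℂ) + 1) * s)))
      (((5 : ℂ) ^ s + 3) / (2 * (5 : ℂ) ^ s * ((5 : ℂ) ^ s - 3))
        + (3 * (5 : ℂ) ^ s - 1) / (2 * (5 : ℂ) ^ s * ((5 : ℂ) ^ s - 1))) := by
  set z : ℂ := (5 : ℂ) ^ s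
  have hz3 : ‖(3 : ℂ)‖ < ‖z‖ := by
    simpa using lt_norm_ofReal_cpow (a := 5) (b := 3) (by norm_num) (by norm_num) hs
  have hz1 : ‖(1 : ℂ)‖ < ‖z‖ := (by norm_num : ‖(1 : ℂ)‖ < ‖(3 : ℂ)‖).trans hz3
  have hsum := (hasSum_pow_div_pow_succ hz3).add (hasSum_pow_div_pow_succ hz1)
  rw [← inv_sub_three_add_inv_sub_one (norm_pos_iff.mp ((norm_nonneg _).trans_lt hz3))
    (sub_ne_zero.mpr fun h => hz3.ne (by rw [h]))
    (sub_ne_zero.mpr fun h => hz1.ne (by rw [h]))]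
  have hterm : (fun n : ℕ => ((3 : ℂ) ^ n + 1) * (5 : ℂ) ^ (-(((n : ℂ) + 1) * s)))
      = fun n => 3 ^ n / z ^ (n + 1) + 1 ^ n / z ^ (n + 1) := by
    funext n
    rw [cpow_neg_succ_mul, one_pow]
    ring
  rwa [hterm]
end

section
/- Let f₂, f₃, f₀ : ℂ → ℂ be differentiable at 0 with f₂(0) = 0, f₂'(0) = log 2, f₃(0) = 0, f₃'(0) = log 3, f₀(0) = 1, f₀'(0) = 0. Define F : ℂ → ℂ by F(s) = 5^{-s}·f₂(s) + [ (3 + 5^s)/(2·5^s·(5^s - 3)) + 3/(2·5^s) ]·f₃(s) + [ (5^s + 3)·(5^s - 1)/(2·5^s·(5^s - 3)) + (3·5^s - 1)/(2·5^s) ]·f₀(s). Then F(0) = 1 and F is differentiable at 0 with F'(0) = log 2 + (1/2)·log 3 - (1/2)·log 5. -/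
/-!
Writing `x = 5 ^ s`, the three coefficients of `F` are rational functions of `x`, and `x = 1` at
`s = 0`. Since `f₂` and `f₃` vanish at `0`, only the values `1` and `1 / 2` of their coefficients
at `x = 1` enter `F'(0)`. The coefficient of `f₀` simplifies to `2 (x - 2) / (x - 3)` near
`x = 1`, with slope `-1 / 2` there, which the chain rule turns into `-(1 / 2) log 5`.
-/

open Complex Filter Topology

theorem HasDerivAt.comp_const_cpow_zero {φ : ℂ → ℂ} {a φ' : ℂ} (ha : a ≠ 0)
    (hφ : HasDerivAt φ φ' 1) : HasDerivAt (fun s : ℂ => φ (a ^ s)) (φ' * Complex.log a) 0 := by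
  have hpow : HasDerivAt (fun s : ℂ => a ^ s) (Complex.log a) 0 := by
    simpa using (hasStrictDerivAt_const_cpow (y := 0) (Or.inl ha)).hasDerivAt
  exact (cpow_zero a ▸ hφ).comp 0 hpow

theorem DifferentiableAt.hasDerivAt_mul_of_apply_eq_zero {𝕜 : Type*} [NontriviallyNormedField 𝕜]
    {c f : 𝕜 → 𝕜} {f' x : 𝕜} (hc : DifferentiableAt 𝕜 c x) (hf : HasDerivAt f f' x)
    (hfx : f x = 0) : HasDerivAt (fun y => c y * f y) (c x * f') x := by
  simpa [hfx] using hc.hasDerivAt.fun_mul hf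

-- The coefficients of `f₃` and `f₀` in `F (s)`, as functions of `x = 5 ^ s`.
noncomputable def gasketCoeff₃ (x : ℂ) : ℂ := (3 + x) / (2 * x * (x - 3)) + 3 / (2 * x)

noncomputable def gasketCoeff₀ (x : ℂ) : ℂ :=
  (x + 3) * (x - 1) / (2 * x * (x - 3)) + (3 * x - 1) / (2 * x)

theorem gasketCoeff₃_one : gasketCoeff₃ 1 = 1 / 2 := by norm_num [gasketCoeff₃]

theorem differentiableAt_gasketCoeff₃_one : DifferentiableAt ℂ gasketCoeff₃ 1 := by
  unfold gasketCoeff₃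
  fun_prop (disch := norm_num)

theorem gasketCoeff₀_one : gasketCoeff₀ 1 = 1 := by norm_num [gasketCoeff₀]

theorem gasketCoeff₀_eventuallyEq_nhds_one :
    gasketCoeff₀ =ᶠ[𝓝 1] fun x => 2 * (x - 2) / (x - 3) := by
  filter_upwards [eventually_ne_nhds (one_ne_zero : (1 : ℂ) ≠ 0),
    eventually_ne_nhds (by norm_num : (1 : ℂ) ≠ 3)] with x hx0 hx3
  have hx3' : x - 3 ≠ 0 := sub_ne_zero.mpr hx3
  rw [gasketCoeff₀]
  field_simp
  ring

theorem hasDerivAt_gasketCoeff₀_one : HasDerivAt gasketCoeff₀ (-1 / 2) 1 := by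
  have h := (((hasDerivAt_id (1 : ℂ)).sub_const 2).const_mul 2).div
    ((hasDerivAt_id (1 : ℂ)).sub_const 3) (by norm_num)
  refine (h.congr_of_eventuallyEq gasketCoeff₀_eventuallyEq_nhds_one).congr_deriv ?_
  norm_num

/-- The spectral zeta function of the double Sierpinski gasket, written with the
pole at `s = 0` removed, where `f₂, f₃, f₀` play the roles of the polynomial zeta
functions `ζ_{Φ,-2}, ζ_{Φ,-3}, ζ_{Φ,0}`, satisfies `F(0) = 1` and
`F'(0) = log 2 + (1/2)·log 3 - (1/2)·log 5`. -/
theorem double_gasket_zeta_at_zero (f₂ f₃ f₀ F : ℂ → ℂ)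
    (hd₂ : DifferentiableAt ℂ f₂ 0) (h₂0 : f₂ 0 = 0) (h₂' : deriv f₂ 0 = Real.log 2)
    (hd₃ : DifferentiableAt ℂ f₃ 0) (h₃0 : f₃ 0 = 0) (h₃' : deriv f₃ 0 = Real.log 3)
    (hd₀ : DifferentiableAt ℂ f₀ 0) (h₀0 : f₀ 0 = 1) (h₀' : deriv f₀ 0 = 0)
    (hF : ∀ s : ℂ, F s = (5 : ℂ) ^ (-s) * f₂ s
      + ((3 + (5 : ℂ) ^ s) / (2 * (5 : ℂ) ^ s * ((5 : ℂ) ^ s - 3))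
          + 3 / (2 * (5 : ℂ) ^ s)) * f₃ s
      + (((5 : ℂ) ^ s + 3) * ((5 : ℂ) ^ s - 1) / (2 * (5 : ℂ) ^ s * ((5 : ℂ) ^ s - 3))
          + (3 * (5 : ℂ) ^ s - 1) / (2 * (5 : ℂ) ^ s)) * f₀ s) :
    F 0 = 1 ∧ DifferentiableAt ℂ F 0 ∧
      deriv F 0 = Real.log 2 + (1 / 2) * Real.log 3 - (1 / 2) * Real.log 5 := by
  have hF_eq : F = fun s => (5 ^ s)⁻¹ * f₂ s + gasketCoeff₃ (5 ^ s) * f₃ s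
      + gasketCoeff₀ (5 ^ s) * f₀ s := by
    funext s
    rw [hF, cpow_neg, gasketCoeff₃, gasketCoeff₀]
  have h5 : (5 : ℂ) ≠ 0 := by norm_num
  have hinv : HasDerivAt (fun x : ℂ => x⁻¹) (-1) 1 := by
    simpa using hasDerivAt_inv (one_ne_zero : (1 : ℂ) ≠ 0)
  have h₂ := (hinv.comp_const_cpow_zero h5).differentiableAt.hasDerivAt_mul_of_apply_eq_zero
    hd₂.hasDerivAt h₂0
  have h₃ := (differentiableAt_gasketCoeff₃_one.hasDerivAt.comp_const_cpow_zero h5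
    ).differentiableAt.hasDerivAt_mul_of_apply_eq_zero hd₃.hasDerivAt h₃0
  have h₀ := (hasDerivAt_gasketCoeff₀_one.comp_const_cpow_zero h5).mul hd₀.hasDerivAt
  have hD : HasDerivAt F (Real.log 2 + (1 / 2) * Real.log 3 - (1 / 2) * Real.log 5) 0 := by
    rw [hF_eq]
    refine ((h₂.add h₃).add h₀).congr_deriv ?_
    simp only [cpow_zero, inv_one, gasketCoeff₃_one, gasketCoeff₀_one, h₂', h₃', h₀', h₀0,
      ofNat_log]
    ring
  refine ⟨?_, hD.differentiableAt, hD.deriv⟩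
  simp [hF_eq, h₂0, h₃0, h₀0, gasketCoeff₀_one]
end

section
/- Let p be a real number with 0 < p < 1 and p ≠ 1/2, q = 1 - p, λ = 1 + 2/(pq), and let Φ : ℂ → ℂ satisfy Φ(λz) = (1/(pq))·Φ(z)·(Φ(z)²/4 + (3/2)Φ(z) + 2 + pq) for all z ∈ ℂ. Let s ∈ ℂ be such that the family μ ↦ μ^{-s} is summable over the set {μ ∈ ℝ : μ > 0, Φ(-μ) = 0}. Then ∑_{μ > 0, Φ(-μ) = -2-2p} μ^{-s} + ∑_{μ > 0, Φ(-μ) = -2-2q} μ^{-s} = (λ^s - 1) · ∑_{μ > 0, Φ(-μ) = 0} μ^{-s}. -/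
/-!
Since `Φ(-λμ) = R_p(Φ(-μ))` and `R_p` vanishes exactly at `0, -2-2p, -2-2q` (distinct as
`p ≠ 1/2`), multiplication by `λ` maps `{μ > 0 : Φ(-μ) ∈ {0, -2-2p, -2-2q}}` bijectively onto
`{μ > 0 : Φ(-μ) = 0}`. As `(λμ)^{-s} = λ^{-s} μ^{-s}`, this gives
`ζ_{Φ,0} + ζ_{Φ,-2-2p} + ζ_{Φ,-2-2q} = λ^s ζ_{Φ,0}`, the three sums on the left being summable
because their union is.
-/

open Set

def pqDecimation {K : Type*} [Field K] (p q w : K) : K :=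
  1 / (p * q) * w * (w ^ 2 / 4 + 3 / 2 * w + 2 + p * q)

theorem pqDecimation_eq_zero_iff {K : Type*} [Field K] [NeZero (2 : K)] {p q : K}
    (hpq : p * q ≠ 0) (hq : q = 1 - p) (w : K) :
    pqDecimation p q w = 0 ↔
      w = 0 ∨ w = -2 - 2 * p ∨ w = -2 - 2 * q := by
  have h4 : (4 : K) ≠ 0 := by
    simpa [show (4 : K) = 2 * 2 by norm_num] using NeZero.ne (2 : K)
  have hfactor :
      w ^ 2 / 4 + 3 / 2 * w + 2 + p * q = (w - (-2 - 2 * p)) * (w - (-2 - 2 * q)) / 4 := by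
    subst hq
    field_simp
    ring
  rw [pqDecimation, hfactor]
  simp [left_ne_zero_of_mul hpq, right_ne_zero_of_mul hpq, h4, sub_eq_zero]

theorem Summable.tsum_union_of_disjoint {α β : Type*} [AddCommGroup α] [UniformSpace α]
    [IsUniformAddGroup α] [CompleteSpace α] [T2Space α] {f : β → α} {s t : Set β}
    (hd : Disjoint s t) (h : Summable (f ∘ (↑) : ↥(s ∪ t) → α)) :
    ∑' x : ↥(s ∪ t), f x = ∑' x : s, f x + ∑' x : t, f x :=
  (h.comp_injective (inclusion_injective subset_union_left)).tsum_union_disjoint hd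
    (h.comp_injective (inclusion_injective subset_union_right))

theorem hasSum_cpow_neg_preimage_mul_left {c : ℝ} (hc : 0 < c) {S : Set ℝ} (hS : S ⊆ Ici 0)
    {s a : ℂ} (h : HasSum (fun ν : S => ((ν : ℝ) : ℂ) ^ (-s)) a) :
    HasSum (fun μ : ↥((c * ·) ⁻¹' S) => ((μ : ℝ) : ℂ) ^ (-s)) ((c : ℂ) ^ s * a) := by
  let e : ↥((c * ·) ⁻¹' S) ≃ S := (Equiv.mulLeft₀ c hc.ne').subtypeEquiv fun _ => Iff.rfl
  have hscale (μ : ↥((c * ·) ⁻¹' S)) :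
      ((e μ : ℝ) : ℂ) ^ (-s) = ((c : ℂ) ^ s)⁻¹ * ((μ : ℝ) : ℂ) ^ (-s) := by
    have hμ : 0 ≤ (μ : ℝ) := (mul_nonneg_iff_of_pos_left hc).mp (hS μ.2)
    rw [← Complex.cpow_neg]
    exact_mod_cast Complex.mul_cpow_ofReal_nonneg hc.le hμ (-s)
  have hc' : (c : ℂ) ^ s ≠ 0 := by simp [hc.ne']
  have := (e.hasSum_iff.mpr h).mul_left ((c : ℂ) ^ s)
  simpa only [Function.comp_def, hscale, mul_inv_cancel_left₀ hc'] using this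

/-- `ζ_{Φ,w}(s)` is the sum of `μ^{-s}` over `positiveLevelSet Φ {w}`. -/
def positiveLevelSet (Φ : ℂ → ℂ) (W : Set ℂ) : Set ℝ := {μ | 0 < μ ∧ Φ (-(μ : ℂ)) ∈ W}

namespace positiveLevelSet

variable (Φ : ℂ → ℂ)

theorem subset_Ici (W : Set ℂ) : positiveLevelSet Φ W ⊆ Ici 0 := fun _ hμ => hμ.1.le

theorem union (W V : Set ℂ) :
    positiveLevelSet Φ (W ∪ V) = positiveLevelSet Φ W ∪ positiveLevelSet Φ V := by
  ext μ
  simp only [positiveLevelSet, mem_ofPred_eq, mem_union, and_or_left]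

theorem disjoint {W V : Set ℂ} (h : Disjoint W V) :
    Disjoint (positiveLevelSet Φ W) (positiveLevelSet Φ V) :=
  disjoint_left.mpr fun _ hW hV => disjoint_left.mp h hW.2 hV.2

theorem mono {W V : Set ℂ} (h : W ⊆ V) : positiveLevelSet Φ W ⊆ positiveLevelSet Φ V :=
  fun _ hμ => ⟨hμ.1, h hμ.2⟩

theorem summable_of_subset {α : Type*} [AddCommGroup α] [UniformSpace α] [IsUniformAddGroup α]
    [CompleteSpace α] {f : ℝ → α} {W V : Set ℂ} (hWV : W ⊆ V)
    (h : Summable (f ∘ (↑) : positiveLevelSet Φ V → α)) :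
    Summable (f ∘ (↑) : positiveLevelSet Φ W → α) :=
  h.comp_injective (inclusion_injective (mono Φ hWV))

theorem tsum_union {α : Type*} [AddCommGroup α] [UniformSpace α] [IsUniformAddGroup α]
    [CompleteSpace α] [T2Space α] {f : ℝ → α} {W V : Set ℂ} (hd : Disjoint W V)
    (h : Summable (f ∘ (↑) : positiveLevelSet Φ (W ∪ V) → α)) :
    ∑' μ : positiveLevelSet Φ (W ∪ V), f μ =
      ∑' μ : positiveLevelSet Φ W, f μ + ∑' μ : positiveLevelSet Φ V, f μ := by
  rw [union] at h ⊢
  exact h.tsum_union_of_disjoint (disjoint Φ hd)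

theorem preimage_eq_preimage_mul {R : ℂ → ℂ} {c : ℝ} (hc : 0 < c)
    (hΦ : ∀ z, Φ (c * z) = R (Φ z)) (W : Set ℂ) :
    positiveLevelSet Φ (R ⁻¹' W) = (c * ·) ⁻¹' positiveLevelSet Φ W := by
  ext μ
  simp only [positiveLevelSet, mem_ofPred_eq, mem_preimage, mul_pos_iff_of_pos_left hc]
  push_cast
  rw [← mul_neg, hΦ]

end positiveLevelSet

/-- For the pq-model with `p ≠ 1/2` and `λ = 1 + 2/(pq)`:
`ζ_{Φ,-2-2p}(s) + ζ_{Φ,-2-2q}(s) = (λ^s - 1)·ζ_{Φ,0}(s)`, where `ζ_{Φ,w}(s)` is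
the unconditional sum of `μ^{-s}` over `{μ > 0 : Φ(-μ) = w}`, assuming summability
of the family for `w = 0`. -/
theorem pq_zeta_cancellation_zero (p : ℝ) (hp0 : 0 < p) (hp1 : p < 1)
    (hp : p ≠ 1 / 2) (q : ℝ) (hq : q = 1 - p)
    (lam : ℝ) (hlam : lam = 1 + 2 / (p * q)) (Φ : ℂ → ℂ)
    (hΦ : ∀ z : ℂ, Φ ((lam : ℂ) * z) =
      (1 / ((p : ℂ) * q)) * Φ z * ((Φ z) ^ 2 / 4 + (3 / 2) * Φ z + 2 + (p : ℂ) * q))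
    (s : ℂ)
    (hsum : Summable fun μ : {μ : ℝ // 0 < μ ∧ Φ (-(μ : ℂ)) = 0} =>
      ((μ : ℝ) : ℂ) ^ (-s)) :
    (∑' μ : {μ : ℝ // 0 < μ ∧ Φ (-(μ : ℂ)) = -2 - 2 * p}, ((μ : ℝ) : ℂ) ^ (-s))
      + (∑' μ : {μ : ℝ // 0 < μ ∧ Φ (-(μ : ℂ)) = -2 - 2 * q}, ((μ : ℝ) : ℂ) ^ (-s))
      = (((lam : ℂ)) ^ s - 1) *
        ∑' μ : {μ : ℝ // 0 < μ ∧ Φ (-(μ : ℂ)) = 0}, ((μ : ℝ) : ℂ) ^ (-s) := by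
  have hpq : 0 < p * q := mul_pos hp0 (by linarith)
  have hlam0 : 0 < lam := by rw [hlam]; positivity
  have hpa : (0 : ℂ) ≠ -2 - 2 * p := by exact_mod_cast (by linarith : -2 - 2 * p < 0).ne'
  have hqb : (0 : ℂ) ≠ -2 - 2 * q := by
    exact_mod_cast (by rw [hq]; linarith : -2 - 2 * q < 0).ne'
  have hab : (-2 - 2 * p : ℂ) ≠ -2 - 2 * q := by
    exact_mod_cast fun h : -2 - 2 * p = -2 - 2 * q => hp (by rw [hq] at h; linarith)
  have hroots :
      pqDecimation (p : ℂ) q ⁻¹' {0} = {0} ∪ ({-2 - 2 * (p : ℂ)} ∪ {-2 - 2 * (q : ℂ)}) := by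
    ext w
    exact pqDecimation_eq_zero_iff (by exact_mod_cast hpq.ne') (by rw [hq]; push_cast; ring) w
  change Summable fun μ : positiveLevelSet Φ {0} => ((μ : ℝ) : ℂ) ^ (-s) at hsum
  change ∑' μ : positiveLevelSet Φ {-2 - 2 * (p : ℂ)}, ((μ : ℝ) : ℂ) ^ (-s)
      + ∑' μ : positiveLevelSet Φ {-2 - 2 * (q : ℂ)}, ((μ : ℝ) : ℂ) ^ (-s)
      = ((lam : ℂ) ^ s - 1) * ∑' μ : positiveLevelSet Φ {0}, ((μ : ℝ) : ℂ) ^ (-s)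
  have hscaled := hasSum_cpow_neg_preimage_mul_left hlam0 (positiveLevelSet.subset_Ici Φ {0})
    hsum.hasSum
  rw [← positiveLevelSet.preimage_eq_preimage_mul Φ (R := pqDecimation (p : ℂ) q) hlam0 hΦ,
    hroots] at hscaled
  have hsplit := hscaled.tsum_eq
  rw [positiveLevelSet.tsum_union Φ (f := fun x : ℝ => (x : ℂ) ^ (-s))
      (disjoint_union_right.mpr ⟨disjoint_singleton.mpr hpa, disjoint_singleton.mpr hqb⟩)
      hscaled.summable,
    positiveLevelSet.tsum_union Φ (f := fun x : ℝ => (x : ℂ) ^ (-s)) (disjoint_singleton.mpr hab)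
      (positiveLevelSet.summable_of_subset Φ subset_union_right hscaled.summable)] at hsplit
  linear_combination hsplit
end
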